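/- Sliding a tie endpoint across a pre-crossing (relation (i) of the generalized-tie relations in the tied pseudo braid monoid): for every n ≥ 2 and all indices 1 ≤ i and i+1 < j ≤ n, the equality p_i η_{i,j} = η_{i+1,j} p_i holds in the tied pseudo braid monoid TPM_n. -/

import Mathlib

/-!
The tied pseudo braid monoid `TPM n` (n ≥ 2), presented by generators
σ_1,…,σ_{n−1}, σ_1⁻¹,…,σ_{n−1}⁻¹, p_1,…,p_{n−1}, η_1,…,η_{n−1} subject to the
relations listed in the inductive `TPMRel` below.
-/

/-- Generators of the tied pseudo braid monoid: σ_i, σ_i⁻¹, p_i and η_i for 1 ≤ i ≤ n−1. -/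
inductive TPMGen (n : ℕ) : Type
  | sig (i : ℕ) (h : 1 ≤ i ∧ i ≤ n - 1) : TPMGen n
  | sigInv (i : ℕ) (h : 1 ≤ i ∧ i ≤ n - 1) : TPMGen n
  | p (i : ℕ) (h : 1 ≤ i ∧ i ≤ n - 1) : TPMGen n
  | eta (i : ℕ) (h : 1 ≤ i ∧ i ≤ n - 1) : TPMGen n

/-- The word σ_i in the free monoid on the generators. -/
def wS (n i : ℕ) : FreeMonoid (TPMGen n) :=
  if h : 1 ≤ i ∧ i ≤ n - 1 then FreeMonoid.of (TPMGen.sig i h) else 1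

/-- The word σ_i⁻¹ in the free monoid on the generators. -/
def wSI (n i : ℕ) : FreeMonoid (TPMGen n) :=
  if h : 1 ≤ i ∧ i ≤ n - 1 then FreeMonoid.of (TPMGen.sigInv i h) else 1

/-- The word p_i in the free monoid on the generators. -/
def wP (n i : ℕ) : FreeMonoid (TPMGen n) :=
  if h : 1 ≤ i ∧ i ≤ n - 1 then FreeMonoid.of (TPMGen.p i h) else 1

/-- The word η_i in the free monoid on the generators. -/
def wE (n i : ℕ) : FreeMonoid (TPMGen n) :=
  if h : 1 ≤ i ∧ i ≤ n - 1 then FreeMonoid.of (TPMGen.eta i h) else 1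

/-- The defining relations of the tied pseudo braid monoid `TPM n`. -/
inductive TPMRel (n : ℕ) : FreeMonoid (TPMGen n) → FreeMonoid (TPMGen n) → Prop
  /- σ_i σ_i⁻¹ = σ_i⁻¹ σ_i = 1 -/
  | inv_right (i : ℕ) (h : 1 ≤ i ∧ i ≤ n - 1) :
      TPMRel n (wS n i * wSI n i) 1
  | inv_left (i : ℕ) (h : 1 ≤ i ∧ i ≤ n - 1) :
      TPMRel n (wSI n i * wS n i) 1
  /- σ_i σ_{i+1} σ_i = σ_{i+1} σ_i σ_{i+1} -/
  | braid (i : ℕ) (h : 1 ≤ i ∧ i + 1 ≤ n - 1) :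
      TPMRel n (wS n i * wS n (i+1) * wS n i) (wS n (i+1) * wS n i * wS n (i+1))
  /- σ_i σ_j = σ_j σ_i for |i−j| ≥ 2 -/
  | sig_comm (i j : ℕ) (hi : 1 ≤ i ∧ i ≤ n - 1) (hj : 1 ≤ j ∧ j ≤ n - 1)
      (hij : i + 2 ≤ j ∨ j + 2 ≤ i) :
      TPMRel n (wS n i * wS n j) (wS n j * wS n i)
  /- p_i p_j = p_j p_i for |i−j| ≥ 2 -/
  | p_comm (i j : ℕ) (hi : 1 ≤ i ∧ i ≤ n - 1) (hj : 1 ≤ j ∧ j ≤ n - 1)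
      (hij : i + 2 ≤ j ∨ j + 2 ≤ i) :
      TPMRel n (wP n i * wP n j) (wP n j * wP n i)
  /- p_i σ_j^{±1} = σ_j^{±1} p_i for |i−j| ≥ 2 -/
  | p_sig_far_pos (i j : ℕ) (hi : 1 ≤ i ∧ i ≤ n - 1) (hj : 1 ≤ j ∧ j ≤ n - 1)
      (hij : i + 2 ≤ j ∨ j + 2 ≤ i) :
      TPMRel n (wP n i * wS n j) (wS n j * wP n i)
  | p_sig_far_neg (i j : ℕ) (hi : 1 ≤ i ∧ i ≤ n - 1) (hj : 1 ≤ j ∧ j ≤ n - 1)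
      (hij : i + 2 ≤ j ∨ j + 2 ≤ i) :
      TPMRel n (wP n i * wSI n j) (wSI n j * wP n i)
  /- p_i σ_i^{±1} = σ_i^{±1} p_i -/
  | p_sig_pos (i : ℕ) (h : 1 ≤ i ∧ i ≤ n - 1) :
      TPMRel n (wP n i * wS n i) (wS n i * wP n i)
  | p_sig_neg (i : ℕ) (h : 1 ≤ i ∧ i ≤ n - 1) :
      TPMRel n (wP n i * wSI n i) (wSI n i * wP n i)
  /- σ_i σ_{i+1} p_i = p_{i+1} σ_i σ_{i+1} -/
  | ssp (i : ℕ) (h : 1 ≤ i ∧ i + 1 ≤ n - 1) :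
      TPMRel n (wS n i * wS n (i+1) * wP n i) (wP n (i+1) * wS n i * wS n (i+1))
  /- σ_{i+1} σ_i p_{i+1} = p_i σ_{i+1} σ_i -/
  | ssp' (i : ℕ) (h : 1 ≤ i ∧ i + 1 ≤ n - 1) :
      TPMRel n (wS n (i+1) * wS n i * wP n (i+1)) (wP n i * wS n (i+1) * wS n i)
  /- η_i η_j = η_j η_i for all i, j -/
  | eta_comm (i j : ℕ) (hi : 1 ≤ i ∧ i ≤ n - 1) (hj : 1 ≤ j ∧ j ≤ n - 1) :
      TPMRel n (wE n i * wE n j) (wE n j * wE n i)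
  /- η_i σ_i = σ_i η_i -/
  | eta_sig (i : ℕ) (h : 1 ≤ i ∧ i ≤ n - 1) :
      TPMRel n (wE n i * wS n i) (wS n i * wE n i)
  /- η_i σ_j = σ_j η_i for |i−j| ≥ 2 -/
  | eta_sig_far (i j : ℕ) (hi : 1 ≤ i ∧ i ≤ n - 1) (hj : 1 ≤ j ∧ j ≤ n - 1)
      (hij : i + 2 ≤ j ∨ j + 2 ≤ i) :
      TPMRel n (wE n i * wS n j) (wS n j * wE n i)
  /- η_i σ_j σ_i^ε = σ_j σ_i^ε η_j for |i−j| = 1, ε = ±1 -/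
  | eta_slide_pos (i j : ℕ) (hi : 1 ≤ i ∧ i ≤ n - 1) (hj : 1 ≤ j ∧ j ≤ n - 1)
      (hij : j = i + 1 ∨ i = j + 1) :
      TPMRel n (wE n i * wS n j * wS n i) (wS n j * wS n i * wE n j)
  | eta_slide_neg (i j : ℕ) (hi : 1 ≤ i ∧ i ≤ n - 1) (hj : 1 ≤ j ∧ j ≤ n - 1)
      (hij : j = i + 1 ∨ i = j + 1) :
      TPMRel n (wE n i * wS n j * wSI n i) (wS n j * wSI n i * wE n j)
  /- η_i η_j σ_i = η_j σ_i η_j = σ_i η_i η_j for |i−j| = 1 -/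
  | eta_eta_sig₁ (i j : ℕ) (hi : 1 ≤ i ∧ i ≤ n - 1) (hj : 1 ≤ j ∧ j ≤ n - 1)
      (hij : j = i + 1 ∨ i = j + 1) :
      TPMRel n (wE n i * wE n j * wS n i) (wE n j * wS n i * wE n j)
  | eta_eta_sig₂ (i j : ℕ) (hi : 1 ≤ i ∧ i ≤ n - 1) (hj : 1 ≤ j ∧ j ≤ n - 1)
      (hij : j = i + 1 ∨ i = j + 1) :
      TPMRel n (wE n j * wS n i * wE n j) (wS n i * wE n i * wE n j)
  /- η_i² = η_i -/
  | eta_idem (i : ℕ) (h : 1 ≤ i ∧ i ≤ n - 1) :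
      TPMRel n (wE n i * wE n i) (wE n i)
  /- p_i η_i = η_i p_i -/
  | p_eta (i : ℕ) (h : 1 ≤ i ∧ i ≤ n - 1) :
      TPMRel n (wP n i * wE n i) (wE n i * wP n i)
  /- p_i η_j = η_j p_i for |i−j| ≥ 2 -/
  | p_eta_far (i j : ℕ) (hi : 1 ≤ i ∧ i ≤ n - 1) (hj : 1 ≤ j ∧ j ≤ n - 1)
      (hij : i + 2 ≤ j ∨ j + 2 ≤ i) :
      TPMRel n (wP n i * wE n j) (wE n j * wP n i)
  /- η_i p_j p_i = p_j p_i η_j for |i−j| = 1 -/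
  | eta_pp (i j : ℕ) (hi : 1 ≤ i ∧ i ≤ n - 1) (hj : 1 ≤ j ∧ j ≤ n - 1)
      (hij : j = i + 1 ∨ i = j + 1) :
      TPMRel n (wE n i * wP n j * wP n i) (wP n j * wP n i * wE n j)
  /- η_i η_j p_i = η_j p_i η_j = p_i η_i η_j for |i−j| = 1 -/
  | eta_eta_p₁ (i j : ℕ) (hi : 1 ≤ i ∧ i ≤ n - 1) (hj : 1 ≤ j ∧ j ≤ n - 1)
      (hij : j = i + 1 ∨ i = j + 1) :
      TPMRel n (wE n i * wE n j * wP n i) (wE n j * wP n i * wE n j)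
  | eta_eta_p₂ (i j : ℕ) (hi : 1 ≤ i ∧ i ≤ n - 1) (hj : 1 ≤ j ∧ j ≤ n - 1)
      (hij : j = i + 1 ∨ i = j + 1) :
      TPMRel n (wE n j * wP n i * wE n j) (wP n i * wE n i * wE n j)
  /- η_i p_j σ_i = p_j σ_i η_j for |i−j| = 1 -/
  | eta_ps (i j : ℕ) (hi : 1 ≤ i ∧ i ≤ n - 1) (hj : 1 ≤ j ∧ j ≤ n - 1)
      (hij : j = i + 1 ∨ i = j + 1) :
      TPMRel n (wE n i * wP n j * wS n i) (wP n j * wS n i * wE n j)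
  /- η_i σ_j p_i = σ_j p_i η_j for |i−j| = 1 -/
  | eta_sp (i j : ℕ) (hi : 1 ≤ i ∧ i ≤ n - 1) (hj : 1 ≤ j ∧ j ≤ n - 1)
      (hij : j = i + 1 ∨ i = j + 1) :
      TPMRel n (wE n i * wS n j * wP n i) (wS n j * wP n i * wE n j)
  /- p_i η_j = σ_i η_j σ_i⁻¹ p_i for |i−j| = 1 -/
  | p_eta_conj (i j : ℕ) (hi : 1 ≤ i ∧ i ≤ n - 1) (hj : 1 ≤ j ∧ j ≤ n - 1)
      (hij : j = i + 1 ∨ i = j + 1) :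
      TPMRel n (wP n i * wE n j) (wS n i * wE n j * wSI n i * wP n i)

/-- The tied pseudo braid monoid `TPM n`: the quotient of the free monoid on the
generators by the congruence generated by the defining relations. -/
def TPM (n : ℕ) := (conGen (TPMRel n)).Quotient

instance (n : ℕ) : Monoid (TPM n) :=
  inferInstanceAs (Monoid ((conGen (TPMRel n)).Quotient))

/-- The generator σ_i of `TPM n` (defined for 1 ≤ i ≤ n−1; junk value 1 otherwise). -/
def TPM.s (n i : ℕ) : TPM n := (conGen (TPMRel n)).mk' (wS n i)

/-- The generator σ_i⁻¹ of `TPM n` (defined for 1 ≤ i ≤ n−1; junk value 1 otherwise). -/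
def TPM.sInv (n i : ℕ) : TPM n := (conGen (TPMRel n)).mk' (wSI n i)

/-- The generator p_i of `TPM n` (defined for 1 ≤ i ≤ n−1; junk value 1 otherwise). -/
def TPM.p (n i : ℕ) : TPM n := (conGen (TPMRel n)).mk' (wP n i)

/-- The generator η_i of `TPM n` (defined for 1 ≤ i ≤ n−1; junk value 1 otherwise). -/
def TPM.e (n i : ℕ) : TPM n := (conGen (TPMRel n)).mk' (wE n i)

/-- The generalized tie η_{i,j} = σ_i σ_{i+1} ⋯ σ_{j−2} η_{j−1} σ_{j−2}⁻¹ ⋯ σ_{i+1}⁻¹ σ_i⁻¹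
in `TPM n`, for 1 ≤ i < j ≤ n (in particular η_{i,i+1} = η_i). -/
def TPM.genTie (n i j : ℕ) : TPM n :=
  (((List.range' i (j - 1 - i)).map (TPM.s n)).prod) * TPM.e n (j - 1) *
    (((List.range' i (j - 1 - i)).reverse.map (TPM.sInv n)).prod)

/-!
Since σ_{j−1} η_j σ_{j−1}⁻¹ = σ_j⁻¹ η_{j−1} σ_j, we have η_{i,j+1} = σ_j⁻¹ η_{i,j} σ_j, and p_i
commutes with σ_j^{±1} for j ≥ i + 2; so the relation propagates by induction on j from j = i + 2.
There the relation p_i η_{i+1} = σ_i η_{i+1} σ_i⁻¹ p_i gives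
p_i η_{i,i+2} = σ_i² η_{i+1} σ_i⁻² p_i, and the two tie-sliding relations show that σ_i and
σ_i⁻¹ conjugate η_{i+1} to the same element σ_{i+1}⁻¹ η_i σ_{i+1}, so σ_i² η_{i+1} σ_i⁻² = η_{i+1}.
-/

namespace TPM

variable {n i j : ℕ}

theorem mk'_eq_of_rel {a b : FreeMonoid (TPMGen n)} (h : TPMRel n a b) :
    (conGen (TPMRel n)).mk' a = (conGen (TPMRel n)).mk' b :=
  (conGen (TPMRel n)).eq.mpr (ConGen.Rel.of a b h)

theorem s_mul_sInv (h1 : 1 ≤ i) (h2 : i < n) : s n i * sInv n i = 1 :=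
  mk'_eq_of_rel (TPMRel.inv_right (n := n) i ⟨h1, by omega⟩)

theorem sInv_mul_s (h1 : 1 ≤ i) (h2 : i < n) : sInv n i * s n i = 1 :=
  mk'_eq_of_rel (TPMRel.inv_left (n := n) i ⟨h1, by omega⟩)

theorem s_mul_sInv_cancel_left (h1 : 1 ≤ i) (h2 : i < n) (x : TPM n) :
    s n i * (sInv n i * x) = x := by
  rw [← mul_assoc, s_mul_sInv h1 h2, one_mul]

theorem sInv_mul_s_cancel_left (h1 : 1 ≤ i) (h2 : i < n) (x : TPM n) :
    sInv n i * (s n i * x) = x := by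
  rw [← mul_assoc, sInv_mul_s h1 h2, one_mul]

def sUnit (h1 : 1 ≤ i) (h2 : i < n) : (TPM n)ˣ :=
  ⟨s n i, sInv n i, s_mul_sInv h1 h2, sInv_mul_s h1 h2⟩

theorem commute_sInv_of_commute_s {x : TPM n} (h1 : 1 ≤ i) (h2 : i < n) (h : Commute x (s n i)) :
    Commute x (sInv n i) :=
  Commute.units_inv_right (u := sUnit h1 h2) h

theorem commute_s_s (hi1 : 1 ≤ i) (hi2 : i < n) (hj1 : 1 ≤ j) (hj2 : j < n)
    (hij : i + 2 ≤ j ∨ j + 2 ≤ i) : Commute (s n i) (s n j) :=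
  mk'_eq_of_rel (TPMRel.sig_comm (n := n) i j ⟨hi1, by omega⟩ ⟨hj1, by omega⟩ hij)

theorem commute_p_s_self (h1 : 1 ≤ i) (h2 : i < n) : Commute (p n i) (s n i) :=
  mk'_eq_of_rel (TPMRel.p_sig_pos (n := n) i ⟨h1, by omega⟩)

theorem commute_p_s (hi1 : 1 ≤ i) (hi2 : i < n) (hj1 : 1 ≤ j) (hj2 : j < n)
    (hij : i + 2 ≤ j ∨ j + 2 ≤ i) : Commute (p n i) (s n j) :=
  mk'_eq_of_rel (TPMRel.p_sig_far_pos (n := n) i j ⟨hi1, by omega⟩ ⟨hj1, by omega⟩ hij)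

theorem e_mul_s_mul_s (h1 : 1 ≤ i) (h2 : i + 1 < n) :
    e n i * s n (i + 1) * s n i = s n (i + 1) * s n i * e n (i + 1) :=
  mk'_eq_of_rel
    (TPMRel.eta_slide_pos (n := n) i (i + 1) ⟨h1, by omega⟩ ⟨by omega, by omega⟩ (Or.inl rfl))

theorem e_mul_s_mul_sInv (h1 : 1 ≤ i) (h2 : i + 1 < n) :
    e n (i + 1) * s n i * sInv n (i + 1) = s n i * sInv n (i + 1) * e n i :=
  mk'_eq_of_rel
    (TPMRel.eta_slide_neg (n := n) (i + 1) i ⟨by omega, by omega⟩ ⟨h1, by omega⟩ (Or.inr rfl))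

theorem semiconjBy_p_e_succ (h1 : 1 ≤ i) (h2 : i + 1 < n) :
    SemiconjBy (p n i) (e n (i + 1)) (s n i * e n (i + 1) * sInv n i) :=
  mk'_eq_of_rel
    (TPMRel.p_eta_conj (n := n) i (i + 1) ⟨h1, by omega⟩ ⟨by omega, by omega⟩ (Or.inl rfl))

theorem s_mul_e_mul_sInv (h1 : 1 ≤ i) (h2 : i + 1 < n) :
    s n i * e n (i + 1) * sInv n i = sInv n (i + 1) * e n i * s n (i + 1) := by
  have h1' : 1 ≤ i + 1 := by omega
  calc s n i * e n (i + 1) * sInv n i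
      = sInv n (i + 1) * (s n (i + 1) * s n i * e n (i + 1)) * sInv n i := by
        simp only [mul_assoc, sInv_mul_s_cancel_left h1' h2]
    _ = sInv n (i + 1) * e n i * s n (i + 1) := by
        rw [← e_mul_s_mul_s h1 h2]
        simp only [mul_assoc, s_mul_sInv h1 (Nat.lt_of_succ_lt h2), mul_one]

theorem sInv_mul_e_mul_s (h1 : 1 ≤ i) (h2 : i + 1 < n) :
    sInv n i * e n (i + 1) * s n i = sInv n (i + 1) * e n i * s n (i + 1) := by
  have h1' : 1 ≤ i + 1 := by omega
  calc sInv n i * e n (i + 1) * s n i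
      = sInv n i * (e n (i + 1) * s n i * sInv n (i + 1)) * s n (i + 1) := by
        simp only [mul_assoc, sInv_mul_s h1' h2, mul_one]
    _ = sInv n (i + 1) * e n i * s n (i + 1) := by
        rw [e_mul_s_mul_sInv h1 h2]
        simp only [mul_assoc, sInv_mul_s_cancel_left h1 (Nat.lt_of_succ_lt h2)]

theorem s_mul_conj_e_mul_sInv (h1 : 1 ≤ i) (h2 : i + 1 < n) :
    s n i * (s n i * e n (i + 1) * sInv n i) * sInv n i = e n (i + 1) := by
  have hi : i < n := Nat.lt_of_succ_lt h2
  rw [s_mul_e_mul_sInv h1 h2, ← sInv_mul_e_mul_s h1 h2]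
  simp only [mul_assoc, s_mul_sInv_cancel_left h1 hi, s_mul_sInv h1 hi, mul_one]

theorem genTie_add_two :
    genTie n i (i + 2) = s n i * e n (i + 1) * sInv n i := by
  simp [genTie]

theorem genTie_add_one : genTie n i (i + 1) = e n i := by
  simp [genTie]

theorem genTie_succ_right (hi : 1 ≤ i) (hij : i < j) (hj : j < n) :
    genTie n i (j + 1) = sInv n j * genTie n i j * s n j := by
  obtain ⟨k, rfl⟩ : ∃ k, j = k + 1 := ⟨j - 1, by omega⟩
  have hlen : k + 1 - i = (k - i) + 1 := by omega
  have hlast : i + (k - i) = k := by omega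
  simp only [genTie, Nat.add_sub_cancel]
  rw [hlen, List.range'_1_concat, hlast, List.map_append, List.reverse_append, List.map_append,
    List.prod_append, List.prod_append]
  simp only [List.reverse_singleton, List.map_cons, List.map_nil, List.prod_cons, List.prod_nil,
    mul_one]
  set L := ((List.range' i (k - i)).map (s n)).prod
  set R := ((List.range' i (k - i)).reverse.map (sInv n)).prod
  have hL : Commute (sInv n (k + 1)) L := by
    refine Commute.list_prod_right _ _ fun x hx => ?_
    obtain ⟨l, hl, rfl⟩ := List.mem_map.mp hx
    rw [List.mem_range'_1] at hl
    exact (commute_sInv_of_commute_s (by omega) hj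
      (commute_s_s (by omega) (by omega) (by omega) hj (by omega))).symm
  have hR : Commute (s n (k + 1)) R := by
    refine Commute.list_prod_right _ _ fun x hx => ?_
    obtain ⟨l, hl, rfl⟩ := List.mem_map.mp hx
    rw [List.mem_reverse, List.mem_range'_1] at hl
    exact commute_sInv_of_commute_s (by omega) (by omega)
      (commute_s_s (by omega) hj (by omega) (by omega) (by omega))
  calc L * s n k * e n (k + 1) * (sInv n k * R)
      = L * (s n k * e n (k + 1) * sInv n k) * R := by simp only [mul_assoc]
    _ = L * (sInv n (k + 1) * e n k * s n (k + 1)) * R := by rw [s_mul_e_mul_sInv (by omega) hj]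
    _ = sInv n (k + 1) * (L * e n k * R) * s n (k + 1) := by
        simp only [mul_assoc, hR.eq]
        rw [← mul_assoc (sInv n (k + 1)) L, hL.eq, mul_assoc]

theorem semiconjBy_p_genTie_add_two (hi : 1 ≤ i) (hin : i + 1 < n) :
    SemiconjBy (p n i) (genTie n i (i + 2)) (genTie n (i + 1) (i + 2)) := by
  have hps := commute_p_s_self hi (Nat.lt_of_succ_lt hin)
  have h := (SemiconjBy.mul_right hps (semiconjBy_p_e_succ hi hin)).mul_right
    (commute_sInv_of_commute_s hi (Nat.lt_of_succ_lt hin) hps)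
  rwa [s_mul_conj_e_mul_sInv hi hin, ← genTie_add_two, ← genTie_add_one] at h

end TPM

theorem tpm_genTie_rel_i_general (n : ℕ) (i j : ℕ)
    (hi : 1 ≤ i) (hij : i + 1 < j) (hj : j ≤ n) :
    TPM.p n i * TPM.genTie n i j = TPM.genTie n (i + 1) j * TPM.p n i := by
  induction j, hij using Nat.le_induction with
  | base => exact TPM.semiconjBy_p_genTie_add_two hi hj
  | succ j hij ih =>
    have hjn : j < n := by omega
    have hps : Commute (TPM.p n i) (TPM.s n j) :=
      TPM.commute_p_s hi (by omega) (by omega) hjn (Or.inl hij)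
    rw [TPM.genTie_succ_right hi (by omega) hjn, TPM.genTie_succ_right (by omega) hij hjn]
    exact (SemiconjBy.mul_right (TPM.commute_sInv_of_commute_s (by omega) hjn hps)
      (ih (by omega))).mul_right hps

/-- **Relation (i) of the generalized-tie relations in `TPM n`**: for every n ≥ 2 and
indices 1 ≤ i with i+1 < j ≤ n, p_i η_{i,j} = η_{i+1,j} p_i holds in `TPM n`. -/
theorem tpm_genTie_rel_i (n : ℕ) (hn : 2 ≤ n) (i j : ℕ)
    (hi : 1 ≤ i) (hij : i + 1 < j) (hj : j ≤ n) :
    TPM.p n i * TPM.genTie n i j = TPM.genTie n (i + 1) j * TPM.p n i :=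
  tpm_genTie_rel_i_general n i j hi hij hj
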